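/- Let φ₂ : ℕ → ℕ (where ℕ = {1, 2, 3, …}) be defined by φ₂(1) = φ₂(2) = 3 and φ₂(n) = 2n for n ≥ 3, and let X = {0, 1} with the discrete topology. Then the generalized shift dynamical system (X^ℕ, σ_{φ₂}) is Li-Yorke sensitive. -/

import Mathlib

open Filter Topology

open scoped Classical in
/-- The metric `D(x, y) = ∑_{n ≥ 1} δ(x_n, y_n) / 2^n` on `X^ℕ`, `ℕ = {1, 2, 3, …}`. -/
noncomputable def pD {X : Type*} (x y : ℕ+ → X) : ℝ :=
  ∑' n : ℕ+, (if x n = y n then (0 : ℝ) else 1) / 2 ^ (n : ℕ)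

/-- The generalized shift `σ_φ` on `X^ℕ`, `ℕ = {1, 2, 3, …}`. -/
def pshift {X : Type*} (φ : ℕ+ → ℕ+) : (ℕ+ → X) → (ℕ+ → X) := fun x => x ∘ φ

/-- `(x, y)` is a scrambled pair of `f` with respect to the distance function `d`. -/
def scrambledPair {Z : Type*} (d : Z → Z → ℝ) (f : Z → Z) (x y : Z) : Prop :=
  liminf (fun n : ℕ => d (f^[n] x) (f^[n] y)) atTop = 0 ∧
    0 < limsup (fun n : ℕ => d (f^[n] x) (f^[n] y)) atTop

/-- `φ₂(1) = φ₂(2) = 3` and `φ₂(n) = 2n` for `n ≥ 3`. -/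
def phi2 : ℕ+ → ℕ+ := fun n => if n ≤ 2 then 3 else 2 * n

/-!
Given `x` and a neighbourhood of `x` containing every point that agrees with `x` on the
coordinates `≤ a`, let `y` be `x` flipped exactly at the coordinates `3 * 2 ^ (a + 2 ^ i)`.
Under `φ₂^[n]` the coordinates `1, 2` land on `3 * 2 ^ (n - 1)` and a coordinate `k ≥ 3` on
`2 ^ n * k`. So at the times `a + 2 ^ i + 1` the orbits of `x` and `y` differ at the first
coordinate (distance `≥ 1/2`), while at the times `a + 2 ^ i + 2` the gap between the exponents
`2 ^ i` and `2 ^ (i + 1)` keeps the first `i` coordinates off the flipped set (distance `≤ 2⁻ⁱ`).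
-/

section Metric

open scoped Classical

variable {X : Type*}

lemma pD_summable (x y : ℕ+ → X) :
    Summable fun k : ℕ+ => (if x k = y k then (0 : ℝ) else 1) / 2 ^ (k : ℕ) := by
  refine .of_nonneg_of_le (fun k => by positivity) (fun k => ?_)
    (summable_geometric_two.comp_injective PNat.coe_injective)
  simp only [Function.comp_apply, one_div, inv_pow]
  split_ifs <;> simp

lemma pD_nonneg (x y : ℕ+ → X) : 0 ≤ pD x y :=
  tsum_nonneg fun _ => by positivity

lemma half_pow_le_pD {x y : ℕ+ → X} {k : ℕ+} (h : x k ≠ y k) : (1 / 2 : ℝ) ^ (k : ℕ) ≤ pD x y := by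
  have := (pD_summable x y).le_tsum k fun _ _ => by positivity
  unfold pD
  simpa [if_neg h] using this

lemma pD_le_half_pow {x y : ℕ+ → X} (L : ℕ) (h : ∀ k : ℕ+, (k : ℕ) ≤ L → x k = y k) :
    pD x y ≤ (1 / 2 : ℝ) ^ L := by
  set g : ℕ+ → ℝ := fun k => (if x k = y k then (0 : ℝ) else 1) / 2 ^ (k : ℕ)
  -- only the coordinates `k = n + L + 1` can contribute
  let e : ℕ → ℕ+ := fun n => (n + L).succPNat
  have he : Function.Injective e := fun m n hmn => by simpa [e] using hmn
  have hsupp : Function.support g ⊆ Set.range e := fun k hk => by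
    have hL : L < (k : ℕ) := by
      by_contra! hkL
      exact hk (by simp [g, h k hkL])
    refine ⟨k.natPred - L, PNat.eq ?_⟩
    simp [e, PNat.natPred]
    omega
  have hterm : ∀ n, g (e n) ≤ (1 / 2) ^ L / 2 / 2 ^ n := fun n => by
    have : (2 : ℝ) ^ ((e n : ℕ+) : ℕ) = 2 ^ L * 2 * 2 ^ n := by
      simp only [e, Nat.succPNat_coe, Nat.succ_eq_add_one, pow_succ, pow_add]; ring
    simp only [g, this]
    split_ifs <;> field_simp <;> simp
  calc pD x y = ∑' n, g (e n) := (he.tsum_eq hsupp).symm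
    _ ≤ ∑' n : ℕ, (1 / 2 : ℝ) ^ L / 2 / 2 ^ n :=
        Summable.tsum_le_tsum hterm ((pD_summable x y).comp_injective he)
          (summable_geometric_two' _)
    _ = (1 / 2) ^ L := tsum_geometric_two' _

lemma pD_le_one (x y : ℕ+ → X) : pD x y ≤ 1 := by
  simpa using pD_le_half_pow (x := x) (y := y) 0 fun k hk => absurd hk k.pos.not_ge

end Metric

lemma liminf_eq_zero_of_frequently_le {ι : Type*} {l : Filter ι} [l.NeBot] {u : ι → ℝ}
    (h0 : ∀ i, 0 ≤ u i) (hbdd : IsBoundedUnder (· ≤ ·) l u) (h : ∀ ε > 0, ∃ᶠ i in l, u i ≤ ε) :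
    liminf u l = 0 :=
  le_antisymm
    (le_of_forall_pos_le_add fun ε hε => by
      simpa using liminf_le_of_frequently_le (h ε hε) (isBoundedUnder_of ⟨0, h0⟩))
    (le_liminf_of_le hbdd.isCoboundedUnder_ge (.of_forall h0))

lemma scrambledPair_pD_of_frequently {X : Type*} {f : (ℕ+ → X) → (ℕ+ → X)} {x y : ℕ+ → X}
    (hfar : ∃ᶠ n in atTop, f^[n] x 1 ≠ f^[n] y 1)
    (hnear : ∀ L : ℕ, ∃ᶠ n in atTop, ∀ k : ℕ+, (k : ℕ) ≤ L → f^[n] x k = f^[n] y k) :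
    scrambledPair pD f x y ∧ 1 / 2 ≤ limsup (fun n : ℕ => pD (f^[n] x) (f^[n] y)) atTop := by
  have hbdd : IsBoundedUnder (· ≤ ·) atTop fun n : ℕ => pD (f^[n] x) (f^[n] y) :=
    isBoundedUnder_of ⟨1, fun _ => pD_le_one _ _⟩
  have hlimsup : 1 / 2 ≤ limsup (fun n : ℕ => pD (f^[n] x) (f^[n] y)) atTop :=
    le_limsup_of_frequently_le (hfar.mono fun n hn => by simpa using half_pow_le_pD hn) hbdd
  refine ⟨⟨liminf_eq_zero_of_frequently_le (fun _ => pD_nonneg _ _) hbdd fun ε hε => ?_,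
    by linarith⟩, hlimsup⟩
  obtain ⟨L, hL⟩ := exists_pow_lt_of_lt_one hε (by norm_num : (1 / 2 : ℝ) < 1)
  exact (hnear L).mono fun n hn => (pD_le_half_pow L hn).trans hL.le

lemma exists_forall_eq_of_le_imp_mem {X : Type*} [TopologicalSpace X] {x : ℕ+ → X}
    {U : Set (ℕ+ → X)} (hU : U ∈ 𝓝 x) :
    ∃ a : ℕ, ∀ y : ℕ+ → X, (∀ k : ℕ+, (k : ℕ) ≤ a → y k = x k) → y ∈ U := by
  rw [nhds_pi, mem_pi] at hU
  obtain ⟨I, hI, t, ht, hsub⟩ := hU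
  obtain ⟨a, ha⟩ := hI.bddAbove
  refine ⟨a, fun y hy => hsub fun k hk => ?_⟩
  rw [hy k (PNat.coe_le_coe _ _ |>.mpr (ha hk))]
  exact mem_of_mem_nhds (ht k)

lemma pshift_iterate_apply {X : Type*} (φ : ℕ+ → ℕ+) (n : ℕ) (x : ℕ+ → X) (k : ℕ+) :
    (pshift φ)^[n] x k = x (φ^[n] k) := by
  induction n generalizing x with
  | zero => rfl
  | succ n ih => rw [Function.iterate_succ_apply, ih, Function.iterate_succ_apply']; rfl

section Phi2

lemma phi2_of_le_two {k : ℕ+} (hk : (k : ℕ) ≤ 2) : phi2 k = 3 :=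
  if_pos (PNat.coe_le_coe k 2 |>.mp hk)

lemma coe_phi2_of_three_le {k : ℕ+} (hk : 3 ≤ (k : ℕ)) : (phi2 k : ℕ) = 2 * k := by
  rw [phi2, if_neg (fun h => by have := (PNat.coe_le_coe k 2).mpr h; simp at this; omega)]
  simp

lemma coe_phi2_iterate_of_three_le {k : ℕ+} (hk : 3 ≤ (k : ℕ)) (n : ℕ) :
    (phi2^[n] k : ℕ) = 2 ^ n * k := by
  induction n with
  | zero => simp
  | succ n ih =>
    have h3 : 3 ≤ (phi2^[n] k : ℕ) := by rw [ih]; nlinarith [Nat.one_le_two_pow (n := n)]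
    rw [Function.iterate_succ_apply', coe_phi2_of_three_le h3, ih, pow_succ]
    ring

lemma coe_phi2_iterate_succ_of_le_two {k : ℕ+} (hk : (k : ℕ) ≤ 2) (n : ℕ) :
    (phi2^[n + 1] k : ℕ) = 3 * 2 ^ n := by
  rw [Function.iterate_succ_apply, phi2_of_le_two hk, coe_phi2_iterate_of_three_le le_rfl]
  simp [mul_comm]

lemma phi2_iterate_eq_three_mul_two_pow {n m : ℕ} {k : ℕ+} (hn : n ≠ 0)
    (h : (phi2^[n] k : ℕ) = 3 * 2 ^ m) : n ≤ m + 1 ∧ m < n + k := by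
  rcases le_or_gt (k : ℕ) 2 with hk | hk
  · obtain ⟨n, rfl⟩ := Nat.exists_eq_succ_of_ne_zero hn
    rw [coe_phi2_iterate_succ_of_le_two hk] at h
    have := Nat.pow_right_injective le_rfl (Nat.eq_of_mul_eq_mul_left (by norm_num) h)
    omega
  · rw [coe_phi2_iterate_of_three_le hk] at h
    have hdvd : 2 ^ n ∣ 2 ^ m :=
      (Nat.Coprime.pow_left n (by norm_num : Nat.Coprime 2 3)).dvd_of_dvd_mul_left
        (h ▸ dvd_mul_right _ _)
    have hlt : 2 ^ m < 2 ^ (n + k) := by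
      rw [pow_add]
      nlinarith [Nat.lt_two_pow_self (n := (k : ℕ)), Nat.one_le_two_pow (n := n)]
    exact ⟨(Nat.pow_dvd_pow_iff_le_right one_lt_two |>.mp hdvd).trans m.le_succ,
      (Nat.pow_lt_pow_iff_right (by norm_num)).mp hlt⟩

end Phi2

open scoped Classical in
noncomputable def flipOn {ι : Type*} (s : Set ι) (x : ι → Bool) : ι → Bool :=
  fun k => if k ∈ s then !x k else x k

lemma flipOn_apply_eq_iff {ι : Type*} {s : Set ι} {x : ι → Bool} {k : ι} :
    flipOn s x k = x k ↔ k ∉ s := by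
  unfold flipOn
  split_ifs <;> simp [*]

def flipSet (a : ℕ) : Set ℕ+ :=
  {k | ∃ i : ℕ, (k : ℕ) = 3 * 2 ^ (a + 2 ^ i)}

lemma lt_of_mem_flipSet {a : ℕ} {k : ℕ+} (hk : k ∈ flipSet a) : a < k := by
  obtain ⟨i, hi⟩ := hk
  calc a < 2 ^ a := Nat.lt_two_pow_self
    _ ≤ 2 ^ (a + 2 ^ i) := Nat.pow_le_pow_right two_pos (Nat.le_add_right _ _)
    _ ≤ k := by omega

lemma phi2_iterate_one_mem_flipSet (a i : ℕ) : phi2^[a + 2 ^ i + 1] 1 ∈ flipSet a :=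
  ⟨i, coe_phi2_iterate_succ_of_le_two (by simp) _⟩

lemma phi2_iterate_notMem_flipSet {a i : ℕ} {k : ℕ+} (hk : (k : ℕ) < i) :
    phi2^[a + 2 ^ i + 2] k ∉ flipSet a := by
  rintro ⟨l, hl⟩
  obtain ⟨h₁, h₂⟩ := phi2_iterate_eq_three_mul_two_pow (Nat.succ_ne_zero _) hl
  have hlo : 2 ^ i < 2 ^ l := by omega
  have hhi : 2 ^ l < 2 ^ (i + 1) := by
    rw [pow_succ]
    have := Nat.lt_two_pow_self (n := i)
    omega
  rw [Nat.pow_lt_pow_iff_right (by norm_num)] at hlo hhi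
  omega

lemma tendsto_add_two_pow_add_atTop (a c : ℕ) : Tendsto (fun i => a + 2 ^ i + c) atTop atTop :=
  tendsto_atTop_mono (fun i => show i ≤ _ by have := Nat.lt_two_pow_self (n := i); omega)
    tendsto_id

/-- For `X = {0, 1}` discrete, the generalized shift system
`(X^ℕ, σ_{φ₂})` is Li-Yorke sensitive. -/
theorem stmt14 :
    ∃ κ > (0 : ℝ), ∀ x : ℕ+ → Bool, ∀ U : Set (ℕ+ → Bool), IsOpen U → x ∈ U →
      ∃ y ∈ U, scrambledPair pD (pshift phi2) x y ∧
        κ < limsup (fun n : ℕ => pD ((pshift phi2)^[n] x) ((pshift phi2)^[n] y)) atTop := by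
  refine ⟨1 / 4, by norm_num, fun x U hU hxU => ?_⟩
  obtain ⟨a, ha⟩ := exists_forall_eq_of_le_imp_mem (hU.mem_nhds hxU)
  set y := flipOn (flipSet a) x
  have hxy (n : ℕ) (k : ℕ+) :
      (pshift phi2)^[n] x k = (pshift phi2)^[n] y k ↔ phi2^[n] k ∉ flipSet a := by
    rw [pshift_iterate_apply, pshift_iterate_apply, eq_comm, flipOn_apply_eq_iff]
  have hfar : ∃ᶠ n in atTop, (pshift phi2)^[n] x 1 ≠ (pshift phi2)^[n] y 1 :=
    (tendsto_add_two_pow_add_atTop a 1).frequently <| .of_forall fun i => by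
      rw [ne_eq, hxy, not_not]
      exact phi2_iterate_one_mem_flipSet a i
  have hnear (L : ℕ) :
      ∃ᶠ n in atTop, ∀ k : ℕ+, (k : ℕ) ≤ L → (pshift phi2)^[n] x k = (pshift phi2)^[n] y k :=
    (tendsto_add_two_pow_add_atTop a 2).frequently <| (eventually_gt_atTop L).frequently.mono
      fun i hi k hk => (hxy _ _).2 (phi2_iterate_notMem_flipSet (by omega))
  obtain ⟨hscrambled, hlimsup⟩ := scrambledPair_pD_of_frequently hfar hnear
  refine ⟨y, ha y fun k hk => flipOn_apply_eq_iff.2 fun hmem => ?_, hscrambled, by linarith⟩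
  exact (lt_of_mem_flipSet hmem).not_ge hk
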